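/- arXiv:1712.05595 — 4 statements merged into one kernel-verified Lean document; each statement's English description precedes it below -/
import Mathlib

section
/- Let H be a real Hilbert space, E a real normed vector space, and T : H → E an injective continuous linear map. Let T₀ > 0, M ≥ 0, and f : [0, T₀] → H be a function such that ‖f(t)‖_H ≤ M for every t ∈ [0, T₀] and such that the composition t ↦ T(f(t)) is continuous from [0, T₀] to E. Then f is weakly continuous: for every y ∈ H, the real-valued function t ↦ ⟨f(t), y⟩_H is continuous on [0, T₀]. -/
/-!
The functionals `⟪·, z⟫` that factor as `g ∘ T` with `g ∈ E'` pair continuously with `f`, since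
`⟪f t, z⟫ = g (T (f t))`. Because `T` is injective, these `z` form a dense subspace of `H`: a vector
orthogonal to all of them is killed by every `g ∘ T`, so `T` maps it to `0`. Finally, as `f` is
bounded, `z ↦ ⟪f ·, z⟫` is Lipschitz into uniformly convergent functions, so the set of `z` for
which it is continuous is closed, hence all of `H`.
-/

open Filter Topology RealInnerProductSpace

section

variable {H E : Type*} [NormedAddCommGroup H] [InnerProductSpace ℝ H]

section Bounded

variable {α ι : Type*} {f : α → H} {s : Set α} {M : ℝ}

theorem tendstoUniformlyOn_inner_of_tendsto (hbdd : ∀ t ∈ s, ‖f t‖ ≤ M) {l : Filter ι}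
    {u : ι → H} {y : H} (hu : Tendsto u l (𝓝 y)) :
    TendstoUniformlyOn (fun n t => ⟪f t, u n⟫) (fun t => ⟪f t, y⟫) l s := by
  rw [Metric.tendstoUniformlyOn_iff]
  intro ε hε
  have hdist : Tendsto (fun n => M * ‖u n - y‖) l (𝓝 0) := by
    simpa using (tendsto_iff_norm_sub_tendsto_zero.mp hu).const_mul M
  filter_upwards [hdist.eventually (gt_mem_nhds hε)] with n hn t ht
  calc dist ⟪f t, y⟫ ⟪f t, u n⟫ = |⟪f t, u n - y⟫| := by
        rw [Real.dist_eq, inner_sub_right, abs_sub_comm]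
    _ ≤ ‖f t‖ * ‖u n - y‖ := abs_real_inner_le_norm _ _
    _ ≤ M * ‖u n - y‖ := mul_le_mul_of_nonneg_right (hbdd t ht) (norm_nonneg _)
    _ < ε := hn

theorem isClosed_setOf_continuousOn_inner [TopologicalSpace α] (hbdd : ∀ t ∈ s, ‖f t‖ ≤ M) :
    IsClosed {y : H | ContinuousOn (fun t => ⟪f t, y⟫) s} :=
  isClosed_of_closure_subset fun _ hy =>
    (tendstoUniformlyOn_inner_of_tendsto hbdd tendsto_id).continuousOn
      (mem_closure_iff_frequently.mp hy)

end Bounded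

variable [NormedAddCommGroup E] [NormedSpace ℝ E]

/-- The range of the transpose `E' → H'` of `T`, read in `H` through the Riesz isomorphism. -/
def ContinuousLinearMap.transposeRange (T : H →L[ℝ] E) : Submodule ℝ H where
  carrier := {z | ∃ g : StrongDual ℝ E, ∀ x, ⟪x, z⟫ = g (T x)}
  add_mem' := by
    rintro a b ⟨ga, ha⟩ ⟨gb, hb⟩
    exact ⟨ga + gb, fun x => by simp [inner_add_right, ha x, hb x]⟩
  zero_mem' := ⟨0, fun x => by simp⟩
  smul_mem' := by
    rintro c a ⟨ga, ha⟩
    exact ⟨c • ga, fun x => by simp [inner_smul_right, ha x]⟩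

theorem ContinuousOn.inner_of_mem_transposeRange {α : Type*} [TopologicalSpace α] {f : α → H}
    {s : Set α} {T : H →L[ℝ] E} (hcont : ContinuousOn (fun t => T (f t)) s) {z : H}
    (hz : z ∈ T.transposeRange) : ContinuousOn (fun t => ⟪f t, z⟫) s := by
  obtain ⟨g, hg⟩ := hz
  simp_rw [hg]
  exact g.continuous.comp_continuousOn hcont

namespace ContinuousLinearMap

variable [CompleteSpace H] {T : H →L[ℝ] E}

theorem toDual_symm_comp_mem_transposeRange (g : StrongDual ℝ E) :
    (InnerProductSpace.toDual ℝ H).symm (g.comp T) ∈ T.transposeRange :=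
  ⟨g, fun x => by rw [real_inner_comm]; exact InnerProductSpace.toDual_symm_apply⟩

theorem orthogonal_transposeRange_eq_bot (hT : Function.Injective T) :
    T.transposeRangeᗮ = ⊥ := by
  refine (Submodule.eq_bot_iff _).mpr fun z hz => hT ?_
  rw [map_zero]
  refine SeparatingDual.eq_zero_of_forall_dual_eq_zero (R := ℝ) fun g => ?_
  change g.comp T z = 0
  rw [← InnerProductSpace.toDual_symm_apply (y := g.comp T)]
  exact Submodule.inner_right_of_mem_orthogonal (toDual_symm_comp_mem_transposeRange g) hz

theorem dense_transposeRange (hT : Function.Injective T) : Dense (T.transposeRange : Set H) :=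
  Submodule.dense_iff_topologicalClosure_eq_top.mpr <|
    Submodule.topologicalClosure_eq_top_iff.mpr (orthogonal_transposeRange_eq_bot hT)

end ContinuousLinearMap

end

theorem strauss_weak_continuity_general
    {H E : Type*} [NormedAddCommGroup H] [InnerProductSpace ℝ H] [CompleteSpace H]
    [NormedAddCommGroup E] [NormedSpace ℝ E]
    (T : H →L[ℝ] E) (hT : Function.Injective T)
    (T₀ : ℝ) (M : ℝ)
    (f : ℝ → H)
    (hbdd : ∀ t ∈ Set.Icc (0 : ℝ) T₀, ‖f t‖ ≤ M)
    (hcont : ContinuousOn (fun t => T (f t)) (Set.Icc (0 : ℝ) T₀)) :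
    ∀ y : H, ContinuousOn (fun t => ⟪f t, y⟫) (Set.Icc (0 : ℝ) T₀) := by
  have hsub : (T.transposeRange : Set H) ⊆ {y | ContinuousOn (fun t => ⟪f t, y⟫) (Set.Icc 0 T₀)} :=
    fun _ => hcont.inner_of_mem_transposeRange
  exact fun y => (isClosed_setOf_continuousOn_inner hbdd).closure_subset
    ((T.dense_transposeRange hT).mono hsub y)

theorem strauss_weak_continuity
    {H E : Type*} [NormedAddCommGroup H] [InnerProductSpace ℝ H] [CompleteSpace H]
    [NormedAddCommGroup E] [NormedSpace ℝ E]
    (T : H →L[ℝ] E) (hT : Function.Injective T)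
    (T₀ : ℝ) (hT₀ : 0 < T₀) (M : ℝ) (hM : 0 ≤ M)
    (f : ℝ → H)
    (hbdd : ∀ t ∈ Set.Icc (0 : ℝ) T₀, ‖f t‖ ≤ M)
    (hcont : ContinuousOn (fun t => T (f t)) (Set.Icc (0 : ℝ) T₀)) :
    ∀ y : H, ContinuousOn (fun t => ⟪f t, y⟫) (Set.Icc (0 : ℝ) T₀) :=
  strauss_weak_continuity_general T hT T₀ M f hbdd hcont
end

section
/- Let (Ω, ℱ, P) and (S, Σ, ν) be finite measure spaces and m, n ∈ ℕ. Let (f_k)_{k∈ℕ} be a sequence of (ℱ ⊗ Σ)-measurable functions from Ω × S to ℝ^m, each integrable with respect to P ⊗ ν, which is uniformly integrable on (Ω × S, ℱ ⊗ Σ, P ⊗ ν). Let f : Ω × S → ℝ^m be (P ⊗ ν)-integrable and suppose that for P-a.e. ω ∈ Ω, f_k(ω, ·) converges to f(ω, ·) weakly in L¹(S; ℝ^m), i.e. ∫_S f_k(ω, s) · φ(s) dν(s) → ∫_S f(ω, s) · φ(s) dν(s) for every bounded measurable φ : S → ℝ^m. Then f_k converges to f weakly in L¹(Ω × S; ℝ^m):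 for every bounded (ℱ ⊗ Σ)-measurable ψ : Ω × S → ℝ^m, ∫_{Ω×S} f_k · ψ d(P ⊗ ν) → ∫_{Ω×S} f · ψ d(P ⊗ ν). -/
/-! Slice a bounded test function `ψ` at each `ω`: by the pathwise hypothesis the fibre integrals
`F k ω = ∫ ⟪f k (ω, s), ψ (ω, s)⟫ dν(s)` converge to the corresponding ones of `g` for `P`-a.e. `ω`.
Since `|F k| ≤ ‖ψ‖∞ ∫ ‖f k (ω, ·)‖ dν` and `ν` is finite, uniform integrability of `(f k)` on the
product passes to `(F k)` on `Ω`, so Vitali's theorem lets us integrate the a.e. convergence over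
`P`; Fubini turns this into the claim. -/

open MeasureTheory Filter RealInnerProductSpace

/-- A family `(f i)_{i ∈ I}` of `E`-valued measurable functions on a measure space is
uniformly integrable: for every `ε > 0` there is `δ > 0` such that `∫_A ‖f i‖ dm < ε`
for every `i` and every measurable `A` with `m A < δ`. -/
def UnifIntFamily {X : Type*} [MeasurableSpace X] (m : Measure X) {E : Type*}
    [NormedAddCommGroup E] {I : Type*} (f : I → X → E) : Prop :=
  ∀ ε > (0 : ℝ), ∃ δ > (0 : ℝ), ∀ i : I, ∀ A : Set X, MeasurableSet A →
    m A < ENNReal.ofReal δ → ∫ x in A, ‖f i x‖ ∂m < ε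

namespace UnifIntFamily

variable {α : Type*} [MeasurableSpace α] {E F : Type*} [NormedAddCommGroup E]
  [NormedAddCommGroup F] {ι : Type*}

theorem of_norm_le_mul {μ : Measure α} {f : ι → α → E} {g : ι → α → F} {C : ℝ}
    (hf : ∀ i, Integrable (f i) μ) (hUI : UnifIntFamily μ f)
    (hg : ∀ i, AEStronglyMeasurable (g i) μ) (hle : ∀ i, ∀ᵐ x ∂μ, ‖g i x‖ ≤ C * ‖f i x‖) :
    UnifIntFamily μ g := by
  intro ε hε
  obtain ⟨δ, hδ, hsmall⟩ := hUI (ε / (|C| + 1)) (by positivity)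
  refine ⟨δ, hδ, fun i A hA hμA => ?_⟩
  have hgi : Integrable (g i) μ := ((hf i).norm.const_mul C).mono' (hg i) (hle i)
  calc ∫ x in A, ‖g i x‖ ∂μ ≤ ∫ x in A, C * ‖f i x‖ ∂μ :=
        integral_mono_ae hgi.norm.restrict ((hf i).norm.const_mul C).restrict
          (ae_restrict_of_ae (hle i))
    _ = C * ∫ x in A, ‖f i x‖ ∂μ := integral_const_mul C _
    _ ≤ |C| * (ε / (|C| + 1)) := by
        gcongr
        · exact le_abs_self C
        · exact (hsmall i A hA hμA).le
    _ < ε := by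
        rw [mul_div_assoc', div_lt_iff₀ (by positivity)]
        nlinarith

theorem integral_prod_left [NormedSpace ℝ E] {β : Type*} [MeasurableSpace β] {μ : Measure α}
    [SFinite μ] {ν : Measure β} [IsFiniteMeasure ν] {f : ι → α × β → E}
    (hf : ∀ i, Integrable (f i) (μ.prod ν)) (hUI : UnifIntFamily (μ.prod ν) f) :
    UnifIntFamily μ (fun i x => ∫ y, f i (x, y) ∂ν) := by
  intro ε hε
  obtain ⟨δ, hδ, hsmall⟩ := hUI ε hε
  set t := ν.real Set.univ
  refine ⟨δ / (t + 1), by positivity, fun i A hA hμA => ?_⟩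
  have hμνA : (μ.prod ν) (A ×ˢ Set.univ) < ENNReal.ofReal δ := by
    rw [Measure.prod_prod, ← ofReal_measureReal (measure_ne_top ν _)]
    calc μ A * ENNReal.ofReal t ≤ ENNReal.ofReal (δ / (t + 1)) * ENNReal.ofReal t := by gcongr
      _ = ENNReal.ofReal (δ / (t + 1) * t) := (ENNReal.ofReal_mul (by positivity)).symm
      _ < ENNReal.ofReal δ := by
          rw [ENNReal.ofReal_lt_ofReal_iff hδ, div_mul_eq_mul_div, div_lt_iff₀ (by positivity)]
          nlinarith
  have hfA : Integrable (fun p => ‖f i p‖) ((μ.restrict A).prod ν) := by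
    rw [Measure.restrict_prod_eq_prod_univ]
    exact (hf i).norm.restrict
  calc ∫ x in A, ‖∫ y, f i (x, y) ∂ν‖ ∂μ ≤ ∫ x in A, ∫ y, ‖f i (x, y)‖ ∂ν ∂μ :=
        integral_mono_of_nonneg (ae_of_all _ fun _ => norm_nonneg _)
          (hf i).norm.integral_prod_left.restrict
          (ae_of_all _ fun _ => norm_integral_le_integral_norm _)
    _ = ∫ p in A ×ˢ Set.univ, ‖f i p‖ ∂(μ.prod ν) := by
        rw [← Measure.restrict_prod_eq_prod_univ, integral_prod _ hfA]
    _ < ε := hsmall i _ (hA.prod MeasurableSet.univ) hμνA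

-- `hf` is needed since `UnifIntFamily` only sees Bochner integrals, which vanish off integrable
-- functions.
theorem unifIntegrable {μ : Measure α} {f : ι → α → E} (hf : ∀ i, Integrable (f i) μ)
    (hUI : UnifIntFamily μ f) : UnifIntegrable f 1 μ := by
  intro ε hε
  obtain ⟨δ, hδ, hsmall⟩ := hUI ε hε
  refine ⟨δ / 2, by positivity, fun i A hA hμA => ?_⟩
  have hμA' : μ A < ENNReal.ofReal δ :=
    hμA.trans_lt ((ENNReal.ofReal_lt_ofReal_iff hδ).2 (half_lt_self hδ))
  rw [eLpNorm_indicator_eq_eLpNorm_restrict hA, eLpNorm_one_eq_lintegral_enorm,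
    ← ofReal_integral_norm_eq_lintegral_enorm (hf i).restrict]
  exact ENNReal.ofReal_le_ofReal (hsmall i A hA hμA').le

end UnifIntFamily

theorem tendsto_integral_of_unifIntFamily_of_ae_tendsto {α E : Type*} [MeasurableSpace α]
    {μ : Measure α} [IsFiniteMeasure μ] [NormedAddCommGroup E] [NormedSpace ℝ E]
    {f : ℕ → α → E} {g : α → E} (hf : ∀ n, Integrable (f n) μ) (hg : Integrable g μ)
    (hUI : UnifIntFamily μ f) (hfg : ∀ᵐ x ∂μ, Tendsto (fun n => f n x) atTop (nhds (g x))) :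
    Tendsto (fun n => ∫ x, f n x ∂μ) atTop (nhds (∫ x, g x ∂μ)) :=
  tendsto_integral_of_L1' g hg.aestronglyMeasurable (Eventually.of_forall hf)
    (tendsto_Lp_finite_of_tendsto_ae le_rfl ENNReal.one_ne_top
      (fun n => (hf n).aestronglyMeasurable) (memLp_one_iff_integrable.2 hg)
      (hUI.unifIntegrable hf) hfg)

theorem norm_inner_le_mul_norm_of_norm_le {E : Type*} [NormedAddCommGroup E]
    [InnerProductSpace ℝ E] {x y : E} {C : ℝ} (hy : ‖y‖ ≤ C) : ‖⟪x, y⟫‖ ≤ C * ‖x‖ := by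
  rw [mul_comm]
  exact (norm_inner_le_norm x y).trans (mul_le_mul_of_nonneg_left hy (norm_nonneg x))

theorem MeasureTheory.Integrable.inner_of_norm_le {α E : Type*} [MeasurableSpace α] {μ : Measure α}
    [NormedAddCommGroup E] [InnerProductSpace ℝ E] {h ψ : α → E} {C : ℝ} (hh : Integrable h μ)
    (hψ : AEStronglyMeasurable ψ μ) (hψC : ∀ x, ‖ψ x‖ ≤ C) :
    Integrable (fun x => ⟪h x, ψ x⟫) μ :=
  (hh.norm.const_mul C).mono' (hh.aestronglyMeasurable.inner hψ)
    (ae_of_all _ fun x => norm_inner_le_mul_norm_of_norm_le (hψC x))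

theorem pathwise_weak_L1_convergence_implies_product_weak_L1_convergence_general
    {Ω S : Type*} [MeasurableSpace Ω] [MeasurableSpace S]
    (P : Measure Ω) [IsFiniteMeasure P] (ν : Measure S) [IsFiniteMeasure ν]
    {m : ℕ}
    (f : ℕ → Ω × S → EuclideanSpace ℝ (Fin m))
    (hfi : ∀ k, Integrable (f k) (P.prod ν))
    (hUI : UnifIntFamily (P.prod ν) f)
    (g : Ω × S → EuclideanSpace ℝ (Fin m))
    (hgi : Integrable g (P.prod ν))
    (hweak : ∀ᵐ ω ∂P, ∀ φ : S → EuclideanSpace ℝ (Fin m), Measurable φ →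
      (∃ C : ℝ, ∀ s, ‖φ s‖ ≤ C) →
      Tendsto (fun k => ∫ s, ⟪f k (ω, s), φ s⟫ ∂ν) atTop
        (nhds (∫ s, ⟪g (ω, s), φ s⟫ ∂ν))) :
    ∀ ψ : Ω × S → EuclideanSpace ℝ (Fin m), Measurable ψ →
      (∃ C : ℝ, ∀ p, ‖ψ p‖ ≤ C) →
      Tendsto (fun k => ∫ p, ⟪f k p, ψ p⟫ ∂(P.prod ν)) atTop
        (nhds (∫ p, ⟪g p, ψ p⟫ ∂(P.prod ν))) := by
  rintro ψ hψ ⟨C, hψC⟩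
  have hfψ k := (hfi k).inner_of_norm_le hψ.aestronglyMeasurable hψC
  have hgψ := hgi.inner_of_norm_le hψ.aestronglyMeasurable hψC
  have hUIψ : UnifIntFamily (P.prod ν) fun k p => ⟪f k p, ψ p⟫ :=
    hUI.of_norm_le_mul hfi (fun k => (hfψ k).aestronglyMeasurable)
      fun k => ae_of_all _ fun p => norm_inner_le_mul_norm_of_norm_le (hψC p)
  simp_rw [integral_prod _ (hfψ _), integral_prod _ hgψ]
  refine tendsto_integral_of_unifIntFamily_of_ae_tendsto (fun k => (hfψ k).integral_prod_left)
    hgψ.integral_prod_left (hUIψ.integral_prod_left hfψ) ?_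
  filter_upwards [hweak] with ω hω
  exact hω _ (hψ.comp measurable_prodMk_left) ⟨C, fun s => hψC _⟩

theorem pathwise_weak_L1_convergence_implies_product_weak_L1_convergence
    {Ω S : Type*} [MeasurableSpace Ω] [MeasurableSpace S]
    (P : Measure Ω) [IsFiniteMeasure P] (ν : Measure S) [IsFiniteMeasure ν]
    {m : ℕ}
    (f : ℕ → Ω × S → EuclideanSpace ℝ (Fin m))
    (hfm : ∀ k, Measurable (f k))
    (hfi : ∀ k, Integrable (f k) (P.prod ν))
    (hUI : UnifIntFamily (P.prod ν) f)
    (g : Ω × S → EuclideanSpace ℝ (Fin m))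
    (hgi : Integrable g (P.prod ν))
    (hweak : ∀ᵐ ω ∂P, ∀ φ : S → EuclideanSpace ℝ (Fin m), Measurable φ →
      (∃ C : ℝ, ∀ s, ‖φ s‖ ≤ C) →
      Tendsto (fun k => ∫ s, ⟪f k (ω, s), φ s⟫ ∂ν) atTop
        (nhds (∫ s, ⟪g (ω, s), φ s⟫ ∂ν))) :
    ∀ ψ : Ω × S → EuclideanSpace ℝ (Fin m), Measurable ψ →
      (∃ C : ℝ, ∀ p, ‖ψ p‖ ≤ C) →
      Tendsto (fun k => ∫ p, ⟪f k p, ψ p⟫ ∂(P.prod ν)) atTop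
        (nhds (∫ p, ⟪g p, ψ p⟫ ∂(P.prod ν))) :=
  pathwise_weak_L1_convergence_implies_product_weak_L1_convergence_general P ν f hfi hUI g hgi hweak
end

section
/- Let (Ω, ℱ, P) and (S, Σ, ν) be finite measure spaces. Let (f_k)_{k∈ℕ} be a sequence of (ℱ ⊗ Σ)-measurable functions from Ω × S to ℝ with sup_k ∫_{Ω×S} |f_k|² d(P ⊗ ν) < ∞, and let f : Ω × S → ℝ be square-integrable with respect to P ⊗ ν. Suppose that for P-a.e. ω ∈ Ω, f_k(ω, ·) converges to f(ω, ·) weakly in L²(S, ν), i.e. ∫_S f_k(ω, s) φ(s) dν(s) → ∫_S f(ω, s) φ(s) dν(s) for every φ ∈ L²(S, ν). Then f_k converges to f weakly in L²(Ω × S, P ⊗ ν): for every ψ ∈ L²(Ω × S, P ⊗ ν), ∫_{Ω×S} f_k ψ d(P ⊗ ν) → ∫_{Ω×S} f ψ d(P ⊗ ν). -/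
open MeasureTheory Filter Topology

open scoped ENNReal

/-!
Fix `ψ`. By Fubini, the pairing of `f k` with `ψ` is the `P`-integral of the pathwise pairings
`G k ω = ∫ f k (ω, s) * ψ (ω, s) dν`, which converge for a.e. `ω` by hypothesis because a.e. slice
of `ψ` lies in `L²(ν)`. Cauchy–Schwarz in `s` gives `|G k ω| ≤ ‖f k (ω, ·)‖₂ * ‖ψ (ω, ·)‖₂`, where
the first factor is bounded in `L²(P)` uniformly in `k` and the second is a fixed `L²(P)` function;
Cauchy–Schwarz in `ω` then bounds `∫_A |G k| dP` by a constant times the `L²(P)` norm of the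
second factor on `A`, which is small when `P A` is. So `(G k)` is uniformly integrable, and Vitali's
convergence theorem lets the integral pass to the limit.
-/

namespace MeasureTheory

section Slice

variable {α β E : Type*} [MeasurableSpace α] [MeasurableSpace β] [NormedAddCommGroup E]
  {μ : Measure α} {ν : Measure β} [SFinite ν] {F : α × β → E} {p : ℝ≥0∞}

theorem StronglyMeasurable.measurable_eLpNorm_slice (hF : StronglyMeasurable F) (hp0 : p ≠ 0)
    (hp : p ≠ ∞) : Measurable fun x ↦ eLpNorm (fun y ↦ F (x, y)) p ν := by
  simp_rw [eLpNorm_eq_lintegral_rpow_enorm_toReal hp0 hp]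
  exact (Measurable.lintegral_prod_right' (hF.enorm.pow_const _)).pow_const _

theorem eLpNorm_eLpNorm_slice (hF : StronglyMeasurable F) (hp0 : p ≠ 0) (hp : p ≠ ∞) :
    eLpNorm (fun x ↦ eLpNorm (fun y ↦ F (x, y)) p ν) p μ = eLpNorm F p (μ.prod ν) := by
  have hp' : p.toReal ≠ 0 := (ENNReal.toReal_pos hp0 hp).ne'
  simp_rw [eLpNorm_eq_lintegral_rpow_enorm_toReal hp0 hp, enorm_eq_self, ← ENNReal.rpow_mul,
    one_div, inv_mul_cancel₀ hp', ENNReal.rpow_one]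
  rw [lintegral_prod _ (hF.enorm.pow_const _).aemeasurable]

theorem eLpNorm_toReal_eLpNorm_slice_le (hF : StronglyMeasurable F) (hp0 : p ≠ 0) (hp : p ≠ ∞) :
    eLpNorm (fun x ↦ (eLpNorm (fun y ↦ F (x, y)) p ν).toReal) p μ ≤ eLpNorm F p (μ.prod ν) := by
  rw [← eLpNorm_eLpNorm_slice hF hp0 hp]
  refine eLpNorm_mono_enorm fun x ↦ ?_
  simpa [Real.enorm_eq_ofReal ENNReal.toReal_nonneg] using ENNReal.ofReal_toReal_le

theorem MemLp.ae_memLp_slice (hF : StronglyMeasurable F) (hFp : MemLp F p (μ.prod ν))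
    (hp0 : p ≠ 0) (hp : p ≠ ∞) : ∀ᵐ x ∂μ, MemLp (fun y ↦ F (x, y)) p ν := by
  have hmeas := hF.enorm.pow_const p.toReal
  have hfin := (eLpNorm_lt_top_iff_lintegral_rpow_enorm_lt_top hp0 hp).1 hFp.2
  rw [lintegral_prod _ hmeas.aemeasurable] at hfin
  filter_upwards [ae_lt_top hmeas.lintegral_prod_right' hfin.ne] with x hx
  exact ⟨(hF.comp_measurable measurable_prodMk_left).aestronglyMeasurable,
    (eLpNorm_lt_top_iff_lintegral_rpow_enorm_lt_top hp0 hp).2 hx⟩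

end Slice

variable {α : Type*} [MeasurableSpace α] {μ : Measure α}

theorem norm_integral_mul_le_toReal_eLpNorm_mul {p q : ℝ≥0∞} [p.HolderConjugate q]
    {u v : α → ℝ} (hu : MemLp u p μ) (hv : MemLp v q μ) :
    ‖∫ x, u x * v x ∂μ‖ ≤ (eLpNorm u p μ).toReal * (eLpNorm v q μ).toReal := by
  have holder : eLpNorm (fun x ↦ u x * v x) 1 μ ≤ eLpNorm u p μ * eLpNorm v q μ := by
    simpa using eLpNorm_le_eLpNorm_mul_eLpNorm'_of_norm hu.1 hv.1 (· * ·) 1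
      (.of_forall fun x ↦ by simp [norm_mul])
  calc ‖∫ x, u x * v x ∂μ‖ ≤ (eLpNorm (fun x ↦ u x * v x) 1 μ).toReal := by
        rw [eLpNorm_one_eq_lintegral_enorm,
          ← integral_norm_eq_lintegral_enorm (f := fun x ↦ u x * v x) (hu.1.mul hv.1)]
        exact norm_integral_le_integral_norm _
    _ ≤ (eLpNorm u p μ).toReal * (eLpNorm v q μ).toReal := by
        rw [← ENNReal.toReal_mul]
        exact ENNReal.toReal_mono (ENNReal.mul_ne_top hu.2.ne hv.2.ne) holder

theorem eLpNorm_two_eq_lintegral_ofReal_sq_rpow (u : α → ℝ) :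
    eLpNorm u 2 μ = (∫⁻ x, ENNReal.ofReal (u x ^ 2) ∂μ) ^ (1 / 2 : ℝ) := by
  rw [eLpNorm_eq_lintegral_rpow_enorm_toReal two_ne_zero ENNReal.ofNat_ne_top]
  congr 2 with x
  rw [Real.enorm_eq_ofReal_abs, ENNReal.toReal_ofNat,
    ENNReal.ofReal_rpow_of_nonneg (abs_nonneg _) zero_le_two, Real.rpow_two, sq_abs]

section UniformIntegrability

variable {E : Type*} [NormedAddCommGroup E]

theorem unifIntegrable_of_norm_le_mul {ι : Type*} {p q : ℝ≥0∞} [p.HolderConjugate q]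
    (hq : q ≠ ∞) {G : ι → α → E} {a : ι → α → ℝ} {b : α → ℝ} {C : ℝ≥0∞} (hC : C ≠ ∞)
    (ha : ∀ i, AEStronglyMeasurable (a i) μ) (haC : ∀ i, eLpNorm (a i) p μ ≤ C)
    (hb : MemLp b q μ) (hG : ∀ i, ∀ᵐ x ∂μ, ‖G i x‖ ≤ a i x * b x) :
    UnifIntegrable G 1 μ := by
  intro ε hε
  obtain ⟨δ, hδ, hbδ⟩ := hb.eLpNorm_indicator_le (ENNReal.HolderConjugate.one_le q p) hq
    (ε := ε / (C.toReal + 1)) (by positivity)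
  refine ⟨δ, hδ, fun i s hs hμs ↦ ?_⟩
  calc eLpNorm (s.indicator (G i)) 1 μ ≤ eLpNorm (fun x ↦ a i x * s.indicator b x) 1 μ := by
        refine eLpNorm_mono_ae ?_
        filter_upwards [hG i] with x hx
        by_cases hxs : x ∈ s
        · simpa [hxs] using hx.trans (le_abs_self _)
        · simp [hxs]
    _ ≤ eLpNorm (a i) p μ * eLpNorm (s.indicator b) q μ := by
        simpa using eLpNorm_le_eLpNorm_mul_eLpNorm'_of_norm (ha i) (hb.1.indicator hs) (· * ·) 1
          (.of_forall fun x ↦ by simp [norm_mul])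
    _ ≤ C * ENNReal.ofReal (ε / (C.toReal + 1)) := by gcongr; exacts [haC i, hbδ s hs hμs]
    _ = ENNReal.ofReal (C.toReal * (ε / (C.toReal + 1))) := by
        rw [ENNReal.ofReal_mul ENNReal.toReal_nonneg, ENNReal.ofReal_toReal hC]
    _ ≤ ENNReal.ofReal ε := by
        refine ENNReal.ofReal_le_ofReal ?_
        rw [mul_div_assoc', div_le_iff₀ (by positivity)]
        nlinarith [ENNReal.toReal_nonneg (a := C)]

variable [NormedSpace ℝ E]

theorem tendsto_integral_of_tendsto_ae_of_unifIntegrable [IsFiniteMeasure μ] {G : ℕ → α → E}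
    {g : α → E} (hG : ∀ n, Integrable (G n) μ) (hg : Integrable g μ) (hui : UnifIntegrable G 1 μ)
    (hlim : ∀ᵐ x ∂μ, Tendsto (fun n ↦ G n x) atTop (𝓝 (g x))) :
    Tendsto (fun n ↦ ∫ x, G n x ∂μ) atTop (𝓝 (∫ x, g x ∂μ)) := by
  refine tendsto_integral_of_L1 g hg.1 (.of_forall hG) ?_
  simpa [eLpNorm_one_eq_lintegral_enorm] using
    tendsto_Lp_finite_of_tendsto_ae le_rfl ENNReal.one_ne_top (fun n ↦ (hG n).1)
      (memLp_one_iff_integrable.2 hg) hui hlim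

end UniformIntegrability

section PairingOnProduct

variable {β : Type*} [MeasurableSpace β] {ν : Measure β} [SFinite ν] [IsFiniteMeasure μ]
  {p q : ℝ≥0∞} [p.HolderConjugate q]

theorem tendsto_integral_mul_of_ae_tendsto_integral_slice_mul (hp : p ≠ ∞) (hq : q ≠ ∞)
    {f : ℕ → α × β → ℝ} {g ψ : α × β → ℝ} {C : ℝ≥0∞} (hC : C ≠ ∞)
    (hf : ∀ k, StronglyMeasurable (f k)) (hf_le : ∀ k, eLpNorm (f k) p (μ.prod ν) ≤ C)
    (hg : MemLp g p (μ.prod ν)) (hψ : StronglyMeasurable ψ) (hψq : MemLp ψ q (μ.prod ν))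
    (hlim : ∀ᵐ x ∂μ, Tendsto (fun k ↦ ∫ y, f k (x, y) * ψ (x, y) ∂ν) atTop
      (𝓝 (∫ y, g (x, y) * ψ (x, y) ∂ν))) :
    Tendsto (fun k ↦ ∫ z, f k z * ψ z ∂(μ.prod ν)) atTop (𝓝 (∫ z, g z * ψ z ∂(μ.prod ν))) := by
  have hp0 := ENNReal.HolderConjugate.ne_zero p q
  have hq0 := ENNReal.HolderConjugate.ne_zero q p
  have hfp : ∀ k, MemLp (f k) p (μ.prod ν) :=
    fun k ↦ ⟨(hf k).aestronglyMeasurable, (hf_le k).trans_lt hC.lt_top⟩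
  have hfψ : ∀ k, Integrable (fun z ↦ f k z * ψ z) (μ.prod ν) :=
    fun k ↦ (hfp k).integrable_mul hψq
  have hgψ : Integrable (fun z ↦ g z * ψ z) (μ.prod ν) := hg.integrable_mul hψq
  rw [integral_prod _ hgψ]
  refine (tendsto_congr fun k ↦ integral_prod _ (hfψ k)).2 <|
    tendsto_integral_of_tendsto_ae_of_unifIntegrable (fun k ↦ (hfψ k).integral_prod_left)
      hgψ.integral_prod_left ?_ hlim
  refine unifIntegrable_of_norm_le_mul hq hC
    (a := fun k x ↦ (eLpNorm (fun y ↦ f k (x, y)) p ν).toReal)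
    (b := fun x ↦ (eLpNorm (fun y ↦ ψ (x, y)) q ν).toReal)
    (fun k ↦ ((hf k).measurable_eLpNorm_slice hp0 hp).ennreal_toReal.aestronglyMeasurable)
    (fun k ↦ (eLpNorm_toReal_eLpNorm_slice_le (hf k) hp0 hp).trans (hf_le k))
    ⟨(hψ.measurable_eLpNorm_slice hq0 hq).ennreal_toReal.aestronglyMeasurable,
      (eLpNorm_toReal_eLpNorm_slice_le hψ hq0 hq).trans_lt hψq.2⟩ fun k ↦ ?_
  filter_upwards [(hfp k).ae_memLp_slice (hf k) hp0 hp, hψq.ae_memLp_slice hψ hq0 hq]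
    with x hfx hψx
  exact norm_integral_mul_le_toReal_eLpNorm_mul hfx hψx

end PairingOnProduct

end MeasureTheory

theorem pathwise_weak_L2_convergence_implies_product_weak_L2_convergence
    {Ω S : Type*} [MeasurableSpace Ω] [MeasurableSpace S]
    (P : Measure Ω) [IsFiniteMeasure P] (ν : Measure S) [IsFiniteMeasure ν]
    (f : ℕ → Ω × S → ℝ)
    (hfm : ∀ k, Measurable (f k))
    (hbd : ∃ C : ℝ, ∀ k, ∫⁻ p, ENNReal.ofReal (f k p ^ 2) ∂(P.prod ν) ≤ ENNReal.ofReal C)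
    (g : Ω × S → ℝ)
    (hg : MemLp g 2 (P.prod ν))
    (hweak : ∀ᵐ ω ∂P, ∀ φ : S → ℝ, MemLp φ 2 ν →
      Tendsto (fun k => ∫ s, f k (ω, s) * φ s ∂ν) atTop
        (nhds (∫ s, g (ω, s) * φ s ∂ν))) :
    ∀ ψ : Ω × S → ℝ, MemLp ψ 2 (P.prod ν) →
      Tendsto (fun k => ∫ p, f k p * ψ p ∂(P.prod ν)) atTop
        (nhds (∫ p, g p * ψ p ∂(P.prod ν))) := by
  intro ψ hψ
  obtain ⟨C, hC⟩ := hbd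
  set ψ' := hψ.1.mk ψ
  have hψ' : MemLp ψ' 2 (P.prod ν) := hψ.ae_eq hψ.1.ae_eq_mk
  have pairing_eq (u : Ω × S → ℝ) :
      ∫ z, u z * ψ z ∂(P.prod ν) = ∫ z, u z * ψ' z ∂(P.prod ν) :=
    integral_congr_ae <| hψ.1.ae_eq_mk.mono fun z hz ↦ congrArg (u z * ·) hz
  simp only [pairing_eq]
  refine tendsto_integral_mul_of_ae_tendsto_integral_slice_mul (p := 2) (q := 2)
    ENNReal.ofNat_ne_top ENNReal.ofNat_ne_top (C := ENNReal.ofReal C ^ (1 / 2 : ℝ))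
    (by finiteness) (fun k ↦ (hfm k).stronglyMeasurable) (fun k ↦ ?_) hg
    hψ.1.stronglyMeasurable_mk hψ' ?_
  · rw [eLpNorm_two_eq_lintegral_ofReal_sq_rpow]
    gcongr
    exact hC k
  · filter_upwards [hweak, hψ'.ae_memLp_slice hψ.1.stronglyMeasurable_mk two_ne_zero
      ENNReal.ofNat_ne_top] with ω hω hψω using hω _ hψω
end

section
/- Let (X, 𝒜, m) be a finite measure space and F : ℝ^n → [0, ∞) a convex function. Let (f_k)_{k∈ℕ} be a sequence in L¹(X; ℝ^n) converging weakly in L¹(X; ℝ^n) to f ∈ L¹(X; ℝ^n), i.e. ∫_X f_k · φ dm → ∫_X f · φ dm for every bounded measurable φ : X → ℝ^n. Then ∫_X F(f) dm ≤ liminf_{k→∞} ∫_X F(f_k) dm, where the integrals are taken with values in [0, +∞]. -/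
open MeasureTheory Filter RealInnerProductSpace Set

variable {n : ℕ}

local notation "E" => EuclideanSpace ℝ (Fin n)

lemma exists_subgradient (F : E → ℝ) (hFconv : ConvexOn ℝ Set.univ F)
    (hc : Continuous F) (q : E) : ∃ v : E, ∀ z, F q + ⟪v, z - q⟫ ≤ F z := by
  set S : Set ((EuclideanSpace ℝ (Fin n)) × ℝ) := {p | F p.1 < p.2} with hS
  have hSconv : Convex ℝ S := by
    intro p hp r hr α β hα hβ hαβ
    simp only [hS, Set.mem_setOf_eq] at hp hr ⊢
    have hmain : F (α • p.1 + β • r.1) ≤ α * F p.1 + β * F r.1 := by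
      simpa [smul_eq_mul] using hFconv.2 (mem_univ p.1) (mem_univ r.1) hα hβ hαβ
    have h1 : α * F p.1 + β * F r.1 < α * p.2 + β * r.2 := by
      rcases eq_or_lt_of_le hα with h | h
      · have hβ1 : β = 1 := by linarith
        simp [← h, hβ1, hr]
      · have h2 : α * F p.1 < α * p.2 := by exact (mul_lt_mul_iff_right₀ h).2 hp
        have h3 : β * F r.1 ≤ β * r.2 := mul_le_mul_of_nonneg_left hr.le hβ
        linarith
    calc F (α • p + β • r).1 = F (α • p.1 + β • r.1) := rfl
      _ ≤ α * F p.1 + β * F r.1 := hmain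
      _ < α * p.2 + β * r.2 := h1
      _ = (α • p + β • r).2 := rfl
  have hSopen : IsOpen S := isOpen_lt (hc.comp continuous_fst) continuous_snd
  have hq : ((q, F q) : (EuclideanSpace ℝ (Fin n)) × ℝ) ∉ S := by simp [hS]
  obtain ⟨L, hL⟩ := geometric_hahn_banach_open_point hSconv hSopen hq
  set α : ℝ := L (0, 1) with hαdef
  have hsplit : ∀ (z : E) (t : ℝ), L (z, t) = L (z, 0) + t * α := by
    intro z t
    have h1 : ((z, t) : (EuclideanSpace ℝ (Fin n)) × ℝ) = (z, 0) + t • ((0 : E), (1:ℝ)) := by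
      simp [Prod.ext_iff]
    rw [h1, map_add, L.map_smul, smul_eq_mul, hαdef]
  have hαneg : α < 0 := by
    have h1 := hL (q, F q + 1) (by simp only [hS, Set.mem_setOf_eq]; linarith)
    rw [hsplit q (F q + 1), hsplit q (F q)] at h1
    nlinarith
  have hkey : ∀ z : E, L (z, 0) + F z * α ≤ L (q, 0) + F q * α := by
    intro z
    have h2 : ∀ s : ℝ, 0 < s → L (z, 0) + (F z + s) * α < L (q, 0) + F q * α := by
      intro s hs
      have := hL (z, F z + s) (by simp only [hS, Set.mem_setOf_eq]; linarith)
      rwa [hsplit z (F z + s), hsplit q (F q)] at this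
    refine le_of_forall_pos_lt_add fun ε hε => ?_
    have hs : 0 < ε / (-α) := div_pos hε (by linarith)
    have := h2 _ hs
    have hα0 : α ≠ 0 := by linarith
    have hcalc : (F z + ε / (-α)) * α = F z * α - ε := by
      rw [add_mul, div_mul_eq_mul_div, mul_div_assoc]
      rw [div_neg, div_self hα0]
      ring
    linarith [hcalc ▸ this]
  set T : (EuclideanSpace ℝ (Fin n)) →L[ℝ] ℝ := L.comp (ContinuousLinearMap.inl ℝ _ ℝ) with hT
  have hTapp : ∀ z : E, T z = L (z, 0) := fun z => rfl
  set w : E := (InnerProductSpace.toDual ℝ (EuclideanSpace ℝ (Fin n))).symm T with hw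
  have hwip : ∀ z : E, ⟪w, z⟫ = T z := fun z => InnerProductSpace.toDual_symm_apply
  refine ⟨(-α)⁻¹ • w, fun z => ?_⟩
  have h1 := hkey z
  rw [← hTapp, ← hTapp, ← hwip, ← hwip] at h1
  have h2 : ⟪(-α)⁻¹ • w, z - q⟫ = (-α)⁻¹ * (⟪w, z⟫ - ⟪w, q⟫) := by
    rw [real_inner_smul_left, inner_sub_right]
  rw [h2]
  have hαpos : 0 < -α := by linarith
  have h3 : (-α)⁻¹ * (⟪w, z⟫ - ⟪w, q⟫) ≤ F z - F q := by
    rw [inv_mul_le_iff₀ hαpos]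
    nlinarith
  linarith

lemma exists_affine_family (F : E → ℝ) (hFpos : ∀ x, 0 ≤ F x)
    (hFconv : ConvexOn ℝ Set.univ F) :
    ∃ (a : ℕ → E) (b : ℕ → ℝ), a 0 = 0 ∧ b 0 = 0 ∧
      (∀ i (z : E), ⟪a i, z⟫ + b i ≤ F z) ∧
      ∀ (y : E) (ε : ℝ), 0 < ε → ∃ i, F y - ε < ⟪a i, y⟫ + b i := by
  have hc : Continuous F := hFconv.locallyLipschitz.continuous
  have hsg : ∀ q : E, ∃ v : E, ∀ z, F q + ⟪v, z - q⟫ ≤ F z :=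
    exists_subgradient F hFconv hc
  choose V hV using hsg
  set u : ℕ → E := TopologicalSpace.denseSeq (EuclideanSpace ℝ (Fin n)) with hu
  have hud : DenseRange u := TopologicalSpace.denseRange_denseSeq _
  refine ⟨fun i => Nat.rec (0 : E) (fun j _ => V (u j)) i,
          fun i => Nat.rec (0 : ℝ) (fun j _ => F (u j) - ⟪V (u j), u j⟫) i,
          rfl, rfl, ?_, ?_⟩
  · rintro (_ | j) z
    · simpa using hFpos z
    · have h := hV (u j) z
      rw [inner_sub_right] at h
      show ⟪V (u j), z⟫ + (F (u j) - ⟪V (u j), u j⟫) ≤ F z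
      linarith
  · intro y ε hε
    -- bound F on closedBall y 2
    obtain ⟨M₀, hM₀⟩ := (IsCompact.bddAbove_image (isCompact_closedBall y 2)
      hc.continuousOn : BddAbove (F '' Metric.closedBall y 2))
    set M : ℝ := max M₀ 0 with hM
    have hMnn : 0 ≤ M := le_max_right _ _
    have hMb : ∀ z ∈ Metric.closedBall y 2, F z ≤ M :=
      fun z hz => le_trans (hM₀ ⟨z, hz, rfl⟩) (le_max_left _ _)
    -- subgradient norm bound near y
    have hVb : ∀ q : E, dist q y ≤ 1 → ‖V q‖ ≤ M := by
      intro q hq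
      rcases eq_or_ne (V q) 0 with h | h
      · simpa [h] using hMnn
      · set w : E := ‖V q‖⁻¹ • V q with hw
        have hwn : ‖w‖ = 1 := by
          rw [hw, norm_smul, norm_inv, norm_norm, inv_mul_cancel₀ (norm_ne_zero_iff.2 h)]
        have hmem : q + w ∈ Metric.closedBall y 2 := by
          rw [Metric.mem_closedBall]
          calc dist (q + w) y ≤ dist (q + w) q + dist q y := dist_triangle _ _ _
            _ ≤ 1 + 1 := by
                refine add_le_add ?_ hq
                simp [dist_eq_norm, hwn]
            _ = 2 := by norm_num
        have h1 := hV q (q + w)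
        have h2 : ⟪V q, (q + w) - q⟫ = ‖V q‖ := by
          have : q + w - q = w := by abel
          rw [this, hw, real_inner_smul_right, real_inner_self_eq_norm_sq]
          field_simp [norm_ne_zero_iff.2 h]
        rw [h2] at h1
        have h3 : F (q + w) ≤ M := hMb _ hmem
        have h4 : 0 ≤ F q := hFpos q
        linarith
    set v : E := V y with hv
    set δ : ℝ := min 1 (ε / (‖v‖ + M + 1)) with hδ
    have hδpos : 0 < δ := lt_min one_pos (div_pos hε (by positivity))
    obtain ⟨j, hj⟩ := Metric.denseRange_iff.1 hud y δ hδpos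
    refine ⟨j + 1, ?_⟩
    have hqy : dist (u j) y ≤ 1 := by
      rw [dist_comm] at hj
      exact le_trans hj.le (min_le_left _ _)
    have hVq : ‖V (u j)‖ ≤ M := hVb _ hqy
    have hFq : F y + ⟪v, u j - y⟫ ≤ F (u j) := hV y (u j)
    have hℓ : F (u j) + ⟪V (u j), y - u j⟫ ≤ ⟪V (u j), y⟫ + (F (u j) - ⟪V (u j), u j⟫) := by
      rw [inner_sub_right]; linarith
    -- inner product bounds
    have hb1 : |⟪v, u j - y⟫| ≤ ‖v‖ * ‖u j - y‖ := abs_real_inner_le_norm _ _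
    have hb2 : |⟪V (u j), y - u j⟫| ≤ ‖V (u j)‖ * ‖y - u j‖ := abs_real_inner_le_norm _ _
    have hnorm : ‖y - u j‖ < δ := by rwa [← dist_eq_norm]
    have hnorm' : ‖u j - y‖ = ‖y - u j‖ := norm_sub_rev _ _
    have hδε : δ * (‖v‖ + M + 1) ≤ ε := by
      have h1 : δ ≤ ε / (‖v‖ + M + 1) := min_le_right _ _
      rw [le_div_iff₀ (by positivity)] at h1
      exact h1
    have habs1 := abs_le.1 hb1
    have habs2 := abs_le.1 hb2
    show F y - ε < ⟪V (u j), y⟫ + (F (u j) - ⟪V (u j), u j⟫)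
    have hvnn : (0:ℝ) ≤ ‖v‖ := norm_nonneg _
    have hwnn : (0:ℝ) ≤ ‖y - u j‖ := norm_nonneg _
    nlinarith [mul_le_mul_of_nonneg_right hVq hwnn, mul_lt_mul_of_pos_left hnorm (by positivity : (0:ℝ) < ‖v‖ + M + 1)]

lemma key_liminf {X : Type*} [MeasurableSpace X] (m : Measure X) [IsFiniteMeasure m]
    (F : E → ℝ) (hFpos : ∀ x, 0 ≤ F x)
    (f : ℕ → X → E) (g : X → E)
    (hfi : ∀ k, Integrable (f k) m) (hgi : Integrable g m)
    (hweak : ∀ φ : X → E, Measurable φ →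
      (∃ C : ℝ, ∀ x, ‖φ x‖ ≤ C) →
      Tendsto (fun k => ∫ x, ⟪f k x, φ x⟫ ∂m) atTop (nhds (∫ x, ⟪g x, φ x⟫ ∂m)))
    (φ : X → E) (hφm : Measurable φ) (C : ℝ) (hφb : ∀ x, ‖φ x‖ ≤ C)
    (β : X → ℝ) (hβm : Measurable β) (D : ℝ) (hβb : ∀ x, |β x| ≤ D)
    (hmin : ∀ x (z : E), ⟪z, φ x⟫ + β x ≤ F z) :
    ENNReal.ofReal (∫ x, (⟪g x, φ x⟫ + β x) ∂m) ≤
      liminf (fun k => ∫⁻ x, ENNReal.ofReal (F (f k x)) ∂m) atTop := by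
  have hβi : Integrable β m := by
    refine (integrable_const D).mono' hβm.aestronglyMeasurable (ae_of_all _ fun x => ?_)
    exact hβb x
  have hinner : ∀ (h : X → E), Integrable h m →
      Integrable (fun x => ⟪h x, φ x⟫) m := by
    intro h hh
    refine (hh.norm.const_mul C).mono'
      (AEStronglyMeasurable.inner hh.1 hφm.aestronglyMeasurable) (ae_of_all _ fun x => ?_)
    calc ‖⟪h x, φ x⟫‖ = |⟪h x, φ x⟫| := rfl
      _ ≤ ‖h x‖ * ‖φ x‖ := abs_real_inner_le_norm _ _
      _ ≤ ‖h x‖ * C := by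
          refine mul_le_mul_of_nonneg_left (hφb x) (norm_nonneg _)
      _ = C * ‖h x‖ := mul_comm _ _
  have hki : ∀ k, Integrable (fun x => ⟪f k x, φ x⟫ + β x) m :=
    fun k => (hinner _ (hfi k)).add hβi
  have hgii : Integrable (fun x => ⟪g x, φ x⟫ + β x) m := (hinner _ hgi).add hβi
  -- convergence of integrals
  have htend : Tendsto (fun k => ∫ x, (⟪f k x, φ x⟫ + β x) ∂m) atTop
      (nhds (∫ x, (⟪g x, φ x⟫ + β x) ∂m)) := by
    have h1 := hweak φ hφm ⟨C, hφb⟩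
    have h2 : ∀ k, ∫ x, (⟪f k x, φ x⟫ + β x) ∂m
        = (∫ x, ⟪f k x, φ x⟫ ∂m) + ∫ x, β x ∂m :=
      fun k => integral_add (hinner _ (hfi k)) hβi
    have h3 : ∫ x, (⟪g x, φ x⟫ + β x) ∂m
        = (∫ x, ⟪g x, φ x⟫ ∂m) + ∫ x, β x ∂m := integral_add (hinner _ hgi) hβi
    simp only [h2, h3]
    exact h1.add_const _
  -- per-k bound
  have hbound : ∀ k, ENNReal.ofReal (∫ x, (⟪f k x, φ x⟫ + β x) ∂m)
      ≤ ∫⁻ x, ENNReal.ofReal (F (f k x)) ∂m := by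
    intro k
    have h1 : ∫ x, (⟪f k x, φ x⟫ + β x) ∂m
        ≤ ∫ x, max (⟪f k x, φ x⟫ + β x) 0 ∂m :=
      integral_mono (hki k) (hki k).pos_part (fun x => le_max_left _ _)
    have h2 : ENNReal.ofReal (∫ x, max (⟪f k x, φ x⟫ + β x) 0 ∂m)
        = ∫⁻ x, ENNReal.ofReal (max (⟪f k x, φ x⟫ + β x) 0) ∂m :=
      ofReal_integral_eq_lintegral_ofReal (hki k).pos_part
        (ae_of_all _ fun x => le_max_right _ _)
    calc ENNReal.ofReal (∫ x, (⟪f k x, φ x⟫ + β x) ∂m)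
        ≤ ENNReal.ofReal (∫ x, max (⟪f k x, φ x⟫ + β x) 0 ∂m) :=
          ENNReal.ofReal_le_ofReal h1
      _ = ∫⁻ x, ENNReal.ofReal (max (⟪f k x, φ x⟫ + β x) 0) ∂m := h2
      _ ≤ ∫⁻ x, ENNReal.ofReal (F (f k x)) ∂m := by
          refine lintegral_mono fun x => ENNReal.ofReal_le_ofReal ?_
          exact max_le (hmin x (f k x)) (hFpos _)
  have hof : Tendsto (fun k => ENNReal.ofReal (∫ x, (⟪f k x, φ x⟫ + β x) ∂m)) atTop
      (nhds (ENNReal.ofReal (∫ x, (⟪g x, φ x⟫ + β x) ∂m))) :=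
    (ENNReal.continuous_ofReal.tendsto _).comp htend
  calc ENNReal.ofReal (∫ x, (⟪g x, φ x⟫ + β x) ∂m)
      = liminf (fun k => ENNReal.ofReal (∫ x, (⟪f k x, φ x⟫ + β x) ∂m)) atTop :=
        hof.liminf_eq.symm
    _ ≤ liminf (fun k => ∫⁻ x, ENNReal.ofReal (F (f k x)) ∂m) atTop :=
        liminf_le_liminf (Filter.Eventually.of_forall hbound)

noncomputable def affSeq (a : ℕ → EuclideanSpace ℝ (Fin n)) (b : ℕ → ℝ) :
    ℕ → EuclideanSpace ℝ (Fin n) → ℝ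
  | 0 => fun y => ⟪a 0, y⟫ + b 0
  | (N+1) => fun y => max (affSeq a b N y) (⟪a (N+1), y⟫ + b (N+1))

variable {a : ℕ → EuclideanSpace ℝ (Fin n)} {b : ℕ → ℝ}

lemma affSeq_continuous (N : ℕ) : Continuous (affSeq a b N) := by
  induction N with
  | zero => exact (continuous_const.inner continuous_id').add continuous_const
  | succ N ih => exact ih.max ((continuous_const.inner continuous_id').add continuous_const)

lemma affSeq_mono (y : E) : Monotone (fun N => affSeq a b N y) :=
  monotone_nat_of_le_succ fun N => le_max_left _ _

lemma affSeq_le {F : E → ℝ} (hab : ∀ i (z : E), ⟪a i, z⟫ + b i ≤ F z) (N : ℕ) (y : E) :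
    affSeq a b N y ≤ F y := by
  induction N with
  | zero => exact hab 0 y
  | succ N ih => exact max_le ih (hab (N+1) y)

lemma le_affSeq {i N : ℕ} (hiN : i ≤ N) (y : E) : ⟪a i, y⟫ + b i ≤ affSeq a b N y := by
  induction N with
  | zero =>
    obtain rfl : i = 0 := Nat.le_zero.1 hiN
    exact le_of_eq rfl
  | succ N ih =>
    have hstep : affSeq a b (N+1) y = max (affSeq a b N y) (⟪a (N+1), y⟫ + b (N+1)) := rfl
    rcases Nat.le_add_one_iff.1 hiN with h | h
    · exact le_trans (ih h) (hstep ▸ le_max_left _ _)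
    · rw [hstep, h]
      exact le_max_right _ _

lemma affSeq_attained (N : ℕ) (y : E) :
    ∃ i, i ≤ N ∧ affSeq a b N y = ⟪a i, y⟫ + b i := by
  induction N with
  | zero => exact ⟨0, le_refl _, rfl⟩
  | succ N ih =>
    obtain ⟨i, hi, hieq⟩ := ih
    have hstep : affSeq a b (N+1) y = max (affSeq a b N y) (⟪a (N+1), y⟫ + b (N+1)) := rfl
    rcases max_cases (affSeq a b N y) (⟪a (N+1), y⟫ + b (N+1)) with ⟨h, _⟩ | ⟨h, _⟩
    · exact ⟨i, hi.trans (Nat.le_succ N), by rw [hstep, h, hieq]⟩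
    · exact ⟨N+1, le_refl _, by rw [hstep, h]⟩

lemma affSeq_bound (N : ℕ) : ∃ c d : ℝ, 0 ≤ c ∧ 0 ≤ d ∧
    ∀ y : E, |affSeq a b N y| ≤ c * ‖y‖ + d := by
  induction N with
  | zero =>
    refine ⟨‖a 0‖, |b 0|, norm_nonneg _, abs_nonneg _, fun y => ?_⟩
    calc |⟪a 0, y⟫ + b 0| ≤ |⟪a 0, y⟫| + |b 0| := abs_add_le _ _
      _ ≤ ‖a 0‖ * ‖y‖ + |b 0| := by linarith [abs_real_inner_le_norm (a 0) y]
  | succ N ih =>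
    obtain ⟨c, d, hc, hd, hcd⟩ := ih
    refine ⟨c + ‖a (N+1)‖, d + |b (N+1)|, by positivity, by positivity, fun y => ?_⟩
    have h1 : |affSeq a b (N+1) y| ≤ max |affSeq a b N y| |⟪a (N+1), y⟫ + b (N+1)| :=
      abs_max_le_max_abs_abs
    have h2 : |⟪a (N+1), y⟫ + b (N+1)| ≤ ‖a (N+1)‖ * ‖y‖ + |b (N+1)| := by
      calc |⟪a (N+1), y⟫ + b (N+1)| ≤ |⟪a (N+1), y⟫| + |b (N+1)| := abs_add_le _ _
        _ ≤ ‖a (N+1)‖ * ‖y‖ + |b (N+1)| := by linarith [abs_real_inner_le_norm (a (N+1)) y]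
    have h3 : (0:ℝ) ≤ ‖a (N+1)‖ * ‖y‖ := by positivity
    have h4 : (0:ℝ) ≤ c * ‖y‖ := by positivity
    rcases max_le_iff.1 (le_refl (max |affSeq a b N y| |⟪a (N+1), y⟫ + b (N+1)|)) with _
    have := hcd y
    rcases le_total |affSeq a b N y| |⟪a (N+1), y⟫ + b (N+1)| with h | h
    · rw [max_eq_right h] at h1; nlinarith [abs_nonneg (b (N+1))]
    · rw [max_eq_left h] at h1; nlinarith [abs_nonneg (b (N+1))]

theorem weak_lsc_of_convex_integral_functional
    {X : Type*} [MeasurableSpace X] (m : Measure X) [IsFiniteMeasure m]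
    {n : ℕ}
    (F : EuclideanSpace ℝ (Fin n) → ℝ)
    (hFpos : ∀ x, 0 ≤ F x)
    (hFconv : ConvexOn ℝ Set.univ F)
    (f : ℕ → X → EuclideanSpace ℝ (Fin n)) (g : X → EuclideanSpace ℝ (Fin n))
    (hfi : ∀ k, Integrable (f k) m) (hgi : Integrable g m)
    (hweak : ∀ φ : X → EuclideanSpace ℝ (Fin n), Measurable φ →
      (∃ C : ℝ, ∀ x, ‖φ x‖ ≤ C) →
      Tendsto (fun k => ∫ x, ⟪f k x, φ x⟫ ∂m) atTop (nhds (∫ x, ⟪g x, φ x⟫ ∂m))) :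
    ∫⁻ x, ENNReal.ofReal (F (g x)) ∂m ≤
      liminf (fun k => ∫⁻ x, ENNReal.ofReal (F (f k x)) ∂m) atTop := by
  classical
  obtain ⟨a, b, ha0, hb0, haff, happrox⟩ := exists_affine_family F hFpos hFconv
  have hgsm := hgi.1
  set g' : X → EuclideanSpace ℝ (Fin n) := hgsm.mk g with hg'def
  have hg'm : Measurable g' := hgsm.stronglyMeasurable_mk.measurable
  have hgg' : g =ᵐ[m] g' := hgsm.ae_eq_mk
  have hgi' : Integrable g' m := hgi.congr hgg'
  have hzero : ∀ y : EuclideanSpace ℝ (Fin n), ⟪a 0, y⟫ + b 0 = 0 := by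
    intro y; rw [ha0, hb0]; simp
  have hsnn : ∀ N (y : EuclideanSpace ℝ (Fin n)), 0 ≤ affSeq a b N y :=
    fun N y => (hzero y) ▸ le_affSeq (Nat.zero_le N) y
  -- pointwise sup identity
  have hsup : ∀ y : EuclideanSpace ℝ (Fin n),
      (⨆ N, ENNReal.ofReal (affSeq a b N y)) = ENNReal.ofReal (F y) := by
    intro y
    refine le_antisymm (iSup_le fun N => ENNReal.ofReal_le_ofReal (affSeq_le haff N y)) ?_
    refine ENNReal.le_of_forall_pos_le_add fun ε hε _ => ?_
    obtain ⟨i, hi⟩ := happrox y ε (by exact_mod_cast hε)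
    have h1 : F y ≤ affSeq a b i y + ε := by
      have := le_affSeq (a := a) (b := b) (le_refl i) y
      linarith
    calc ENNReal.ofReal (F y) ≤ ENNReal.ofReal (affSeq a b i y + ε) :=
          ENNReal.ofReal_le_ofReal h1
      _ = ENNReal.ofReal (affSeq a b i y) + ENNReal.ofReal ε :=
          ENNReal.ofReal_add (hsnn i y) ε.coe_nonneg
      _ ≤ (⨆ N, ENNReal.ofReal (affSeq a b N y)) + ε := by
          rw [ENNReal.ofReal_coe_nnreal]
          exact add_le_add (le_iSup (fun N => ENNReal.ofReal (affSeq a b N y)) i) le_rfl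
  -- each truncation gives the liminf bound
  have hstep : ∀ N : ℕ, ∫⁻ x, ENNReal.ofReal (affSeq a b N (g' x)) ∂m ≤
      liminf (fun k => ∫⁻ x, ENNReal.ofReal (F (f k x)) ∂m) atTop := by
    intro N
    -- integrability of the truncation
    obtain ⟨c, d, hc, hd, hcd⟩ := affSeq_bound (a := a) (b := b) N
    have hsm : AEStronglyMeasurable (fun x => affSeq a b N (g' x)) m :=
      (((affSeq_continuous (a := a) (b := b) N).measurable).comp hg'm).aestronglyMeasurable
    have hInt : Integrable (fun x => affSeq a b N (g' x)) m := by
      refine ((hgi'.norm.const_mul c).add (integrable_const d)).mono' hsm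
        (ae_of_all _ fun x => ?_)
      simpa using hcd (g' x)
    -- argmax
    have hex : ∀ x, ∃ i, i ≤ N ∧ affSeq a b N (g' x) = ⟪a i, g' x⟫ + b i :=
      fun x => affSeq_attained N (g' x)
    have hmeasset : ∀ k, MeasurableSet {x | k ≤ N ∧
        affSeq a b N (g' x) = ⟪a k, g' x⟫ + b k} := by
      intro k
      refine (MeasurableSet.const _).inter ?_
      exact measurableSet_eq_fun
        (((affSeq_continuous (a := a) (b := b) N).measurable).comp hg'm)
        ((((continuous_const.inner continuous_id').add
          continuous_const).measurable).comp hg'm)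
    have hcm : Measurable (fun x => Nat.find (hex x)) := measurable_find hex hmeasset
    set cx : X → ℕ := fun x => Nat.find (hex x) with hcx
    have hspec : ∀ x, cx x ≤ N ∧ affSeq a b N (g' x) = ⟪a (cx x), g' x⟫ + b (cx x) :=
      fun x => Nat.find_spec (hex x)
    set φ : X → EuclideanSpace ℝ (Fin n) := fun x => a (cx x) with hφ
    set β : X → ℝ := fun x => b (cx x) with hβ
    have hφm : Measurable φ := measurable_from_nat.comp hcm
    have hβm : Measurable β := measurable_from_nat.comp hcm
    have hne : (Finset.range (N+1)).Nonempty := Finset.nonempty_range_add_one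
    set C : ℝ := (Finset.range (N+1)).sup' hne (fun i => ‖a i‖) with hC
    set D : ℝ := (Finset.range (N+1)).sup' hne (fun i => |b i|) with hD
    have hφb : ∀ x, ‖φ x‖ ≤ C :=
      fun x => Finset.le_sup' (fun i => ‖a i‖)
        (Finset.mem_range.mpr (Nat.lt_succ_of_le (hspec x).1))
    have hβb : ∀ x, |β x| ≤ D :=
      fun x => Finset.le_sup' (fun i => |b i|)
        (Finset.mem_range.mpr (Nat.lt_succ_of_le (hspec x).1))
    have hmin : ∀ x (z : EuclideanSpace ℝ (Fin n)), ⟪z, φ x⟫ + β x ≤ F z := by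
      intro x z
      rw [show (⟪z, φ x⟫ : ℝ) = ⟪φ x, z⟫ from real_inner_comm _ _]
      exact haff (cx x) z
    have hIeq : ∫ x, (⟪g x, φ x⟫ + β x) ∂m = ∫ x, affSeq a b N (g' x) ∂m := by
      refine integral_congr_ae (hgg'.mono fun x hx => ?_)
      have h1 : (⟪g' x, φ x⟫ : ℝ) = ⟪a (cx x), g' x⟫ := real_inner_comm _ _
      dsimp only
      rw [hx, h1]
      exact ((hspec x).2).symm
    have hlin : ∫⁻ x, ENNReal.ofReal (affSeq a b N (g' x)) ∂m
        = ENNReal.ofReal (∫ x, affSeq a b N (g' x) ∂m) :=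
      (ofReal_integral_eq_lintegral_ofReal hInt (ae_of_all _ fun x => hsnn N (g' x))).symm
    rw [hlin, ← hIeq]
    exact key_liminf m F hFpos f g hfi hgi hweak φ hφm C hφb β hβm D hβb hmin
  calc ∫⁻ x, ENNReal.ofReal (F (g x)) ∂m
      = ∫⁻ x, ENNReal.ofReal (F (g' x)) ∂m :=
        lintegral_congr_ae (hgg'.mono fun x hx => by dsimp only; rw [hx])
    _ = ∫⁻ x, (⨆ N, ENNReal.ofReal (affSeq a b N (g' x))) ∂m :=
        lintegral_congr fun x => (hsup (g' x)).symm
    _ = ⨆ N, ∫⁻ x, ENNReal.ofReal (affSeq a b N (g' x)) ∂m := by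
        refine lintegral_iSup (fun N => ?_) (fun N M h x => ?_)
        · exact ENNReal.measurable_ofReal.comp
            ((affSeq_continuous (a := a) (b := b) N).measurable.comp hg'm)
        · exact ENNReal.ofReal_le_ofReal (affSeq_mono (g' x) h)
    _ ≤ liminf (fun k => ∫⁻ x, ENNReal.ofReal (F (f k x)) ∂m) atTop :=
        iSup_le hstep
end
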